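/- arXiv:math/0007101 — 3 statements merged into one kernel-verified Lean document; each statement's English description precedes it below -/
import Mathlib

section
/- Under the hypotheses of Theorem 1 (control law ū = (1-β²k₁k₂)φ + β²k₂ψ + 3β²k₁Rφ with k₁, k₂, C satisfying inequalities (4)-(7)), the only equilibrium point of the closed-loop Moore-Greitzer system in the set {(R,φ,ψ) : R ≥ 0} is the origin (0,0,0). -/
set_option maxHeartbeats 1600000 in
theorem unique_equilibrium (σ β k₁ k₂ C : ℝ) (hσ : σ = 7) (hβ : β = 1/Real.sqrt 2)
    (hk1 : k₁ > 17/8 + (2*C*σ + 3)^2/2)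
    (hk1' : (C*σ - 105/64)*k₁^2 + (3/4)*(-(1/2)*C*σ + 21/4)*k₁ - (C*σ + 3)^2 > 0)
    (hk2 : k₂ > k₁ + (9/4)*k₁^2 + 9*k₁/(4*k₁ - 9/2) + (k₁^2 - 1)^2/4)
    (hC : C > 3/(2*σ)) :
    ∀ R φ ψ : ℝ, 0 ≤ R →
      (-σ*R^2 - σ*R*(2*φ + φ^2) = 0 ∧
       -ψ - (3/2)*φ^2 - (1/2)*φ^3 - 3*R*φ - 3*R = 0 ∧
       -(1/β^2) * (((1 - β^2*k₁*k₂)*φ + β^2*k₂*ψ + 3*β^2*k₁*R*φ) - φ) = 0) →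
      (R, φ, ψ) = ((0:ℝ), (0:ℝ), (0:ℝ)) := by
  subst hσ
  have hβ2 : β^2 = 1/2 := by
    rw [hβ, div_pow, one_pow, Real.sq_sqrt (by norm_num : (2:ℝ) ≥ 0)]
  intro R φ ψ hR ⟨e1, e2, e3⟩
  rw [hβ2] at e3
  -- simplified third equation
  have e3' : k₂*ψ + 3*k₁*R*φ - k₁*k₂*φ = 0 := by linear_combination (-1 : ℝ) * e3
  -- numeric bounds on k₁, k₂
  have hCσ : C*7 > 3/2 := by
    have : (3:ℝ)/(2*7) = 3/14 := by norm_num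
    nlinarith
  have hk1n : k₁ > 20 := by nlinarith
  have hk1pos : (0:ℝ) < k₁ := by linarith
  have hk2n : k₂ > k₁ := by
    have h1 : (0:ℝ) < 4*k₁ - 9/2 := by linarith
    have h2 : 9*k₁/(4*k₁-9/2) > 0 := by positivity
    nlinarith [sq_nonneg (k₁^2 - 1), sq_nonneg k₁]
  have hk2pos : (0:ℝ) < k₂ := by linarith
  -- first equation : R * (R + 2φ + φ²) = 0
  have e1' : R * (R + 2*φ + φ^2) = 0 := by linear_combination (-1/7 : ℝ) * e1
  clear hk1 hk1' hk2 hC hCσ hβ hβ2 e1 e3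
  rcases eq_or_lt_of_le hR with hR0 | hRpos
  · -- R = 0
    have hR0 : R = 0 := hR0.symm
    subst hR0
    have hψ : k₂ * (ψ - k₁*φ) = 0 := by linear_combination e3'
    have hψ' : ψ = k₁*φ := by
      rcases mul_eq_zero.mp hψ with h | h
      · exact absurd h (ne_of_gt hk2pos)
      · linarith
    have hφeq : φ * (k₁ + (3/2)*φ + (1/2)*φ^2) = 0 := by
      linear_combination (-1 : ℝ) * e2 + (-1 : ℝ) * hψ'
    have hquad : k₁ + (3/2)*φ + (1/2)*φ^2 > 0 := by nlinarith [sq_nonneg (φ + 3/2)]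
    have hφ0 : φ = 0 := by
      rcases mul_eq_zero.mp hφeq with h | h
      · exact h
      · exact absurd h (ne_of_gt hquad)
    have hψ0 : ψ = 0 := by rw [hψ', hφ0, mul_zero]
    simp [hφ0, hψ0]
  · -- R > 0
    exfalso
    have hsum : R + 2*φ + φ^2 = 0 := by
      rcases mul_eq_zero.mp e1' with h | h
      · exact absurd h (ne_of_gt hRpos)
      · exact h
    have hφφ : φ * (φ + 2) < 0 := by nlinarith
    have hφneg : φ < 0 := by
      by_contra h
      push_neg at h
      nlinarith [mul_nonneg h (by linarith : (0:ℝ) ≤ φ + 2)]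
    have hφgt : φ > -2 := by
      by_contra h
      push_neg at h
      nlinarith [mul_nonneg (by linarith : (0:ℝ) ≤ -φ) (by linarith : (0:ℝ) ≤ -(φ+2))]
    have hE : φ * (k₂*((5/2)*φ^2 + (15/2)*φ + 6 - k₁) - 3*k₁*φ*(2+φ)) = 0 := by
      linear_combination e3' + k₂ * e2 + (3*k₂*(1+φ) - 3*k₁*φ) * hsum
    have hg : k₂*((5/2)*φ^2 + (15/2)*φ + 6 - k₁) - 3*k₁*φ*(2+φ) = 0 := by
      rcases mul_eq_zero.mp hE with h | h
      · exact absurd h (ne_of_lt hφneg)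
      · exact h
    -- contradiction: LHS is strictly negative
    have hq' : (0:ℝ) ≤ (-φ) * (φ+3) := mul_nonneg (by linarith) (by linarith)
    linarith [mul_nonneg hk2pos.le hq', mul_nonneg hk1pos.le (sq_nonneg (φ+1)),
      mul_nonneg (by linarith : (0:ℝ) ≤ k₂ - k₁) (by linarith : (0:ℝ) ≤ k₁ - 6),
      mul_pos hk1pos (by linarith : (0:ℝ) < k₁ - 9)]
end

section
/- The Jacobian of the observability map H with respect to (R, φ, ψ) (with u, u̇ fixed) is invertible exactly when φ ≠ -1; specifically, its determinant equals -3(1+φ)/β⁴ (up to sign). -/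
theorem observability_jacobian (β u udot R φ ψ : ℝ) (hβ : 0 < β) :
    (!![(0:ℝ), 0, 1;
        0, 1/β^2, 0;
        -3*(1+φ)/β^2, (1/β^2)*(-3*φ - (3/2)*φ^2 - 3*R), -1/β^2] :
      Matrix (Fin 3) (Fin 3) ℝ).det = 3*(1+φ)/β^4 ∧
    (IsUnit (!![(0:ℝ), 0, 1;
        0, 1/β^2, 0;
        -3*(1+φ)/β^2, (1/β^2)*(-3*φ - (3/2)*φ^2 - 3*R), -1/β^2] :
      Matrix (Fin 3) (Fin 3) ℝ).det ↔ φ ≠ -1) := by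
  have hβ' : β ≠ 0 := ne_of_gt hβ
  have hdet : (!![(0:ℝ), 0, 1;
        0, 1/β^2, 0;
        -3*(1+φ)/β^2, (1/β^2)*(-3*φ - (3/2)*φ^2 - 3*R), -1/β^2] :
      Matrix (Fin 3) (Fin 3) ℝ).det = 3*(1+φ)/β^4 := by
    rw [Matrix.det_fin_three]
    simp [Matrix.cons_val_zero, Matrix.cons_val_one]
    field_simp
  refine ⟨hdet, ?_⟩
  rw [hdet, isUnit_iff_ne_zero]
  constructor
  · intro h hφ; apply h; rw [hφ]; ring
  · intro h hc
    apply h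
    have : 3*(1+φ) = 0 := by
      field_simp at hc
      linarith
    linarith
end

section
/- Suppose the origin of the system ẋ = F(x) is asymptotically stable with Lyapunov function V satisfying V̇ < 0 on A \ {0} where A = {x ∈ ℝ³ : x₁ ≥ 0}, and suppose A is positively invariant. Then for every K > 0 the set {x : V(x) ≤ K} ∩ A is positively invariant and contained in the domain of attraction of the origin, and hence A itself is contained in the domain of attraction. -/
/-!
Invariance of `A` keeps a trajectory where the orbital derivative `V̇ = DV · F` is nonpositive, so
`V` decreases along it and a trajectory starting in `{V ≤ K} ∩ A` stays in this compact set (the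
sublevel set alone need not lie in `A`). On its compact part `{V ≥ m}`, `V̇ ≤ -δ < 0`, so `V`
drops below every `m > 0` in finite time; by compactness again, small values of `V` on the set
force `x` close to `0`. Every point of `A` lies in some `{V ≤ K} ∩ A`.
-/

open Set Filter Topology

lemma antitoneOn_add_mul_of_hasDerivAt_le {g g' : ℝ → ℝ} {δ : ℝ}
    (hg : ∀ t ≥ 0, HasDerivAt g (g' t) t) (hg' : ∀ t ≥ 0, g' t ≤ -δ) :
    AntitoneOn (fun t => g t + δ * t) (Ici 0) := by
  have hderiv : ∀ t ≥ 0, HasDerivAt (fun t => g t + δ * t) (g' t + δ) t := fun t ht =>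
    (hg t ht).add (((hasDerivAt_id' t).const_mul δ).congr_deriv (mul_one δ))
  refine antitoneOn_of_hasDerivWithinAt_nonpos (f' := fun t => g' t + δ) (convex_Ici 0)
    (fun t ht => (hderiv t ht).continuousAt.continuousWithinAt) (fun t ht => ?_) (fun t ht => ?_)
  · rw [interior_Ici] at ht
    exact (hderiv t (le_of_lt ht)).hasDerivWithinAt
  · rw [interior_Ici] at ht
    linarith [hg' t (le_of_lt ht)]

variable {E : Type*} [NormedAddCommGroup E]

lemma IsCompact.exists_pos_sublevel_subset_ball {V : E → ℝ} {S : Set E} (hS : IsCompact S)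
    (hV : Continuous V) (hVpos : ∀ y ∈ S, y ≠ 0 → 0 < V y) {ε : ℝ} (hε : 0 < ε) :
    ∃ m > 0, S ∩ {y | V y < m} ⊆ Metric.ball 0 ε := by
  have hD : IsCompact (S ∩ {y | ε ≤ ‖y‖}) :=
    hS.inter_right (isClosed_le continuous_const continuous_norm)
  obtain ⟨m, hm, hmD⟩ := hD.exists_forall_le' hV.continuousOn fun y hy =>
    hVpos y hy.1 fun h => by simp [h] at hy; linarith [hy.2]
  refine ⟨m, hm, fun y hy => ?_⟩
  by_contra hyε
  rw [mem_ball_zero_iff, not_lt] at hyε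
  exact (hmD y ⟨hy.1, hyε⟩).not_gt hy.2

variable [NormedSpace ℝ E]

noncomputable def orbitalDeriv (V : E → ℝ) (F : E → E) (y : E) : ℝ := fderiv ℝ V y (F y)

section Lyapunov

variable {F : E → E} {V : E → ℝ} {S : Set E} {x : ℝ → E}

lemma orbitalDeriv_nonpos (hF0 : F 0 = 0)
    (hVdot : ∀ y ∈ S, y ≠ 0 → orbitalDeriv V F y < 0) :
    ∀ y ∈ S, orbitalDeriv V F y ≤ 0 := by
  intro y hy
  rcases eq_or_ne y 0 with rfl | hy0
  · simp [orbitalDeriv, hF0]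
  · exact (hVdot y hy hy0).le

lemma continuous_orbitalDeriv (hV : ContDiff ℝ 1 V) (hF : Continuous F) :
    Continuous (orbitalDeriv V F) :=
  (hV.continuous_fderiv one_ne_zero).clm_apply hF

lemma hasDerivAt_comp_orbitalDeriv (hV : Differentiable ℝ V) {t : ℝ}
    (hx : HasDerivAt x (F (x t)) t) : HasDerivAt (V ∘ x) (orbitalDeriv V F (x t)) t :=
  (hV (x t)).hasFDerivAt.comp_hasDerivAt t hx

lemma antitoneOn_lyapunov_add_mul (hV : Differentiable ℝ V) {δ : ℝ}
    (hVdot : ∀ y ∈ S, orbitalDeriv V F y ≤ -δ)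
    (hx : ∀ t ≥ 0, HasDerivAt x (F (x t)) t) (hxS : ∀ t ≥ 0, x t ∈ S) :
    AntitoneOn (fun t => V (x t) + δ * t) (Ici 0) :=
  antitoneOn_add_mul_of_hasDerivAt_le (fun t ht => hasDerivAt_comp_orbitalDeriv hV (hx t ht))
    (fun t ht => hVdot _ (hxS t ht))

lemma antitoneOn_lyapunov (hV : Differentiable ℝ V)
    (hVdot : ∀ y ∈ S, orbitalDeriv V F y ≤ 0)
    (hx : ∀ t ≥ 0, HasDerivAt x (F (x t)) t) (hxS : ∀ t ≥ 0, x t ∈ S) :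
    AntitoneOn (fun t => V (x t)) (Ici 0) := by
  simpa using antitoneOn_lyapunov_add_mul (δ := 0) hV (by simpa using hVdot) hx hxS

lemma exists_lyapunov_lt (hV : ContDiff ℝ 1 V) (hF : Continuous F) (hV0 : V 0 = 0)
    (hVdot : ∀ y ∈ S, y ≠ 0 → orbitalDeriv V F y < 0) (hS : IsCompact S)
    (hx : ∀ t ≥ 0, HasDerivAt x (F (x t)) t) (hxS : ∀ t ≥ 0, x t ∈ S)
    {m : ℝ} (hm : 0 < m) : ∃ T ≥ 0, V (x T) < m := by
  by_contra! hstay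
  set C := S ∩ {y | m ≤ V y}
  have hC : IsCompact C := hS.inter_right (isClosed_le continuous_const hV.continuous)
  have hVdotC : ∀ y ∈ C, 0 < -orbitalDeriv V F y := fun y hy =>
    neg_pos.2 <| hVdot y hy.1 fun h => hm.not_ge (by simpa [h, hV0] using hy.2)
  obtain ⟨δ, hδ, hδC⟩ := hC.exists_forall_le'
    (continuous_orbitalDeriv hV hF).neg.continuousOn hVdotC
  have hdecay := antitoneOn_lyapunov_add_mul (S := C) (δ := δ) (hV.differentiable one_ne_zero)
    (fun y hy => le_neg.1 (hδC y hy)) hx (fun t ht => ⟨hxS t ht, hstay t ht⟩)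
  -- at time `|V (x 0)| / δ` the decay would push `V` below `m`
  set T := |V (x 0)| / δ
  have hT : 0 ≤ T := by positivity
  have hδT : δ * T = |V (x 0)| := mul_div_cancel₀ _ hδ.ne'
  have := hdecay self_mem_Ici hT hT
  simp only [mul_zero, add_zero, hδT] at this
  linarith [hstay T hT, le_abs_self (V (x 0))]

theorem tendsto_zero_of_lyapunov (hV : ContDiff ℝ 1 V) (hF : Continuous F) (hF0 : F 0 = 0)
    (hV0 : V 0 = 0) (hVpos : ∀ y ∈ S, y ≠ 0 → 0 < V y)
    (hVdot : ∀ y ∈ S, y ≠ 0 → orbitalDeriv V F y < 0) (hS : IsCompact S)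
    (hx : ∀ t ≥ 0, HasDerivAt x (F (x t)) t) (hxS : ∀ t ≥ 0, x t ∈ S) :
    Tendsto x atTop (𝓝 0) := by
  have hanti := antitoneOn_lyapunov (hV.differentiable one_ne_zero)
    (orbitalDeriv_nonpos hF0 hVdot) hx hxS
  refine Metric.nhds_basis_ball.tendsto_right_iff.2 fun ε hε => ?_
  obtain ⟨m, hm, hball⟩ := hS.exists_pos_sublevel_subset_ball hV.continuous hVpos hε
  obtain ⟨T, hT, hVT⟩ := exists_lyapunov_lt hV hF hV0 hVdot hS hx hxS hm
  filter_upwards [eventually_ge_atTop T] with t ht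
  exact hball ⟨hxS t (hT.trans ht), (hanti hT (hT.trans ht) ht).trans_lt hVT⟩

end Lyapunov

theorem domain_of_attraction_general (F : (Fin 3 → ℝ) → (Fin 3 → ℝ)) (V : (Fin 3 → ℝ) → ℝ)
    (A : Set (Fin 3 → ℝ))
    (hF0 : F 0 = 0) (hFlip : LocallyLipschitz F)
    (hV : ContDiff ℝ 1 V) (hV0 : V 0 = 0)
    (hVpos : ∀ x ∈ A, x ≠ 0 → 0 < V x)
    (hVdot : ∀ x ∈ A, x ≠ 0 → fderiv ℝ V x (F x) < 0)
    (hcompact : ∀ K > 0, IsCompact ({x | V x ≤ K} ∩ A))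
    (hinv : ∀ x : ℝ → (Fin 3 → ℝ), (∀ t ≥ 0, HasDerivAt x (F (x t)) t) →
      x 0 ∈ A → ∀ t ≥ 0, x t ∈ A) :
    (∀ K > 0, ∀ x : ℝ → (Fin 3 → ℝ), (∀ t ≥ 0, HasDerivAt x (F (x t)) t) →
      x 0 ∈ {y | V y ≤ K} ∩ A →
      (∀ t ≥ 0, x t ∈ {y | V y ≤ K} ∩ A) ∧
      Filter.Tendsto x Filter.atTop (nhds 0)) ∧
    (∀ x : ℝ → (Fin 3 → ℝ), (∀ t ≥ 0, HasDerivAt x (F (x t)) t) →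
      x 0 ∈ A → Filter.Tendsto x Filter.atTop (nhds 0)) := by
  have hsublevel : ∀ K > 0, ∀ x : ℝ → (Fin 3 → ℝ),
      (∀ t ≥ 0, HasDerivAt x (F (x t)) t) → x 0 ∈ {y | V y ≤ K} ∩ A →
      (∀ t ≥ 0, x t ∈ {y | V y ≤ K} ∩ A) ∧ Tendsto x atTop (𝓝 0) := by
    intro K hK x hx hx0
    have hxA := hinv x hx hx0.2
    have hanti := antitoneOn_lyapunov (hV.differentiable one_ne_zero)
      (orbitalDeriv_nonpos hF0 hVdot) hx hxA
    have hxS : ∀ t ≥ 0, x t ∈ {y | V y ≤ K} ∩ A := fun t ht =>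
      ⟨(hanti self_mem_Ici ht ht).trans hx0.1, hxA t ht⟩
    exact ⟨hxS, tendsto_zero_of_lyapunov hV hFlip.continuous hF0 hV0
      (fun y hy => hVpos y hy.2) (fun y hy => hVdot y hy.2) (hcompact K hK) hx hxS⟩
  refine ⟨hsublevel, fun x hx hx0 => ?_⟩
  exact (hsublevel (max (V (x 0)) 1) (lt_max_of_lt_right one_pos) x hx
    ⟨le_max_left (V (x 0)) 1, hx0⟩).2

theorem domain_of_attraction (F : (Fin 3 → ℝ) → (Fin 3 → ℝ)) (V : (Fin 3 → ℝ) → ℝ)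
    (A : Set (Fin 3 → ℝ)) (hA : A = {x | 0 ≤ x 0})
    (hF0 : F 0 = 0) (hFlip : LocallyLipschitz F)
    (hV : ContDiff ℝ 1 V) (hV0 : V 0 = 0)
    (hVpos : ∀ x ∈ A, x ≠ 0 → 0 < V x)
    (hVdot : ∀ x ∈ A, x ≠ 0 → fderiv ℝ V x (F x) < 0)
    (hcompact : ∀ K > 0, IsCompact ({x | V x ≤ K} ∩ A))
    (hinv : ∀ x : ℝ → (Fin 3 → ℝ), (∀ t ≥ 0, HasDerivAt x (F (x t)) t) →
      x 0 ∈ A → ∀ t ≥ 0, x t ∈ A) :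
    (∀ K > 0, ∀ x : ℝ → (Fin 3 → ℝ), (∀ t ≥ 0, HasDerivAt x (F (x t)) t) →
      x 0 ∈ {y | V y ≤ K} ∩ A →
      (∀ t ≥ 0, x t ∈ {y | V y ≤ K} ∩ A) ∧
      Filter.Tendsto x Filter.atTop (nhds 0)) ∧
    (∀ x : ℝ → (Fin 3 → ℝ), (∀ t ≥ 0, HasDerivAt x (F (x t)) t) →
      x 0 ∈ A → Filter.Tendsto x Filter.atTop (nhds 0)) :=
  domain_of_attraction_general F V A hF0 hFlip hV hV0 hVpos hVdot hcompact hinv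
end
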